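/- arXiv:1512.03334 — 5 statements merged into one kernel-verified Lean document; each statement's English description precedes it below -/
import Mathlib

section
/- Let U₁ be a unitary operator on a finite-dimensional complex inner product space such that for every eigenvalue λ of U₁, -λ is also an eigenvalue and the eigenspaces of λ and -λ have equal dimension. Then there exists a unitary operator U₂ on the same space with U₁U₂ + U₂U₁ = 0. -/
/-!
U₁ is normal, so its commuting real and imaginary parts are simultaneously diagonalizable and
V is the orthogonal direct sum of the eigenspaces E_λ of U₁. Equal dimensions give linear
isometries E_λ ≃ E_{-λ}; assembled, they form a unitary U₂ sending E_λ to E_{-λ}, and on E_λ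
the maps U₁U₂ and U₂U₁ are -λU₂ and λU₂.
-/

open LinearMap Module.End
open scoped InnerProductSpace ComplexStarModule

theorem LinearMap.ext_of_iSup_eq_top {R R₂ M M₂ ι : Type*} [Semiring R] [Semiring R₂]
    [AddCommMonoid M] [AddCommMonoid M₂] [Module R M] [Module R₂ M₂] {σ : R →+* R₂}
    {p : ι → Submodule R M} (hp : ⨆ i, p i = ⊤) {f g : M →ₛₗ[σ] M₂}
    (h : ∀ i, ∀ x ∈ p i, f x = g x) : f = g :=
  ext_on (s := ⋃ i, (p i : Set M)) (by rw [← Submodule.iSup_eq_span, hp])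
    fun _ hx => by
      obtain ⟨i, hi⟩ := Set.mem_iUnion.mp hx
      exact h i _ hi

theorem mul_add_mul_eq_zero_of_mapsTo_eigenspace_neg {R M : Type*} [CommRing R] [AddCommGroup M]
    [Module R M] {T U : Module.End R M} (hT : ⨆ μ, eigenspace T μ = ⊤)
    (hU : ∀ μ, ∀ x ∈ eigenspace T μ, U x ∈ eigenspace T (-μ)) : T * U + U * T = 0 :=
  ext_of_iSup_eq_top hT fun μ x hx => by
    simp [mem_eigenspace_iff.mp hx, mem_eigenspace_iff.mp (hU μ x hx)]

theorem Module.End.iSup_eigenspace_eq_top_of_isStarNormal {V : Type*} [NormedAddCommGroup V]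
    [InnerProductSpace ℂ V] [FiniteDimensional ℂ V] (T : Module.End ℂ V) [IsStarNormal T] :
    ⨆ μ, eigenspace T μ = ⊤ := by
  have hre : (ℜ T : Module.End ℂ V).IsSymmetric := (isSymmetric_iff_isSelfAdjoint _).mpr (ℜ T).2
  have him : (ℑ T : Module.End ℂ V).IsSymmetric := (isSymmetric_iff_isSelfAdjoint _).mpr (ℑ T).2
  have hjoint : ∀ a b : ℂ,
      eigenspace (ℜ T : Module.End ℂ V) a ⊓ eigenspace (ℑ T : Module.End ℂ V) b ≤
        eigenspace T (a + Complex.I * b) := by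
    rintro a b x ⟨ha, hb⟩
    rw [SetLike.mem_coe, mem_eigenspace_iff] at ha hb
    rw [mem_eigenspace_iff]
    conv_lhs => rw [← realPart_add_I_smul_imaginaryPart T]
    simp [ha, hb, add_smul, smul_smul]
  rw [eq_top_iff, ← hre.iSup_iSup_eigenspace_inf_eigenspace_eq_top_of_commute him
    (Commute.realPart_imaginaryPart T)]
  exact iSup₂_le fun a b => (hjoint a b).trans (le_iSup _ _)

section Unitary

variable {𝕜 V : Type*} [RCLike 𝕜] [NormedAddCommGroup V] [InnerProductSpace 𝕜 V]
  [FiniteDimensional 𝕜 V]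

theorem LinearMap.inner_map_map_of_adjoint_mul_self_eq_one {T : V →ₗ[𝕜] V}
    (hT : adjoint T * T = 1) (x y : V) : ⟪T x, T y⟫_𝕜 = ⟪x, y⟫_𝕜 := by
  rw [← adjoint_inner_right, ← Module.End.mul_apply, hT, Module.End.one_apply]

theorem LinearMap.inner_eq_conj_mul_inner_of_mem_eigenspace {T : V →ₗ[𝕜] V}
    (hT : adjoint T * T = 1) {μ ν : 𝕜} {x y : V} (hx : x ∈ eigenspace T μ)
    (hy : y ∈ eigenspace T ν) : ⟪x, y⟫_𝕜 = starRingEnd 𝕜 μ * ν * ⟪x, y⟫_𝕜 := by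
  conv_lhs => rw [← inner_map_map_of_adjoint_mul_self_eq_one hT, mem_eigenspace_iff.mp hx,
    mem_eigenspace_iff.mp hy, inner_smul_left, inner_smul_right, ← mul_assoc]

theorem LinearMap.orthogonalFamily_eigenspaces_of_adjoint_mul_self_eq_one {T : V →ₗ[𝕜] V}
    (hT : adjoint T * T = 1) :
    OrthogonalFamily 𝕜 (fun μ => eigenspace T μ) fun μ => (eigenspace T μ).subtypeₗᵢ := by
  intro μ ν hne x y
  by_contra hxy
  have hxx : ⟪(x : V), x⟫_𝕜 ≠ 0 := inner_self_ne_zero.mpr fun h => hxy (by simp [h])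
  have cancel : ∀ {a : 𝕜} {z : 𝕜}, z ≠ 0 → z = a * z → a = 1 := fun hz h =>
    (mul_eq_right₀ hz).mp h.symm
  have hμ := cancel hxx (inner_eq_conj_mul_inner_of_mem_eigenspace hT x.2 x.2)
  have hμν := cancel hxy (inner_eq_conj_mul_inner_of_mem_eigenspace hT x.2 y.2)
  exact hne (mul_left_cancel₀ (left_ne_zero_of_mul_eq_one hμ) (hμ.trans hμν.symm))

theorem LinearIsometryEquiv.nonempty_of_finrank_eq {W : Type*} [NormedAddCommGroup W]
    [InnerProductSpace 𝕜 W] [FiniteDimensional 𝕜 W]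
    (h : Module.finrank 𝕜 V = Module.finrank 𝕜 W) : Nonempty (V ≃ₗᵢ[𝕜] W) :=
  ⟨((stdOrthonormalBasis 𝕜 V).reindex (finCongr h)).repr.trans
    (stdOrthonormalBasis 𝕜 W).repr.symm⟩

theorem OrthogonalFamily.exists_adjoint_mul_self_eq_one_of_iSup_eq_top {ι : Type*}
    {E : ι → Submodule 𝕜 V} (hE : OrthogonalFamily 𝕜 (fun i => E i) fun i => (E i).subtypeₗᵢ)
    (hEtop : ⨆ i, E i = ⊤) {f : ∀ i, E i →ₗᵢ[𝕜] V} (hf : OrthogonalFamily 𝕜 (fun i => E i) f) :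
    ∃ U : V →ₗ[𝕜] V, adjoint U * U = 1 ∧ ∀ i (x : E i), U x = f i x := by
  classical
  have hint : DirectSum.IsInternal E :=
    hE.isInternal_iff.mpr (by rw [hEtop, Submodule.top_orthogonal_eq_bot])
  let U : V →ₗ[𝕜] V := DirectSum.toModule 𝕜 ι V (fun i => (f i).toLinearMap) ∘ₗ
    (LinearEquiv.ofBijective (DirectSum.coeLinearMap E) hint).symm.toLinearMap
  have hU : ∀ i (x : E i), U x = f i x := fun i x => by
    have : (LinearEquiv.ofBijective (DirectSum.coeLinearMap E) hint).symm x =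
        DirectSum.lof 𝕜 ι (fun i => E i) i x :=
      (LinearEquiv.symm_apply_eq _).mpr (DirectSum.coeLinearMap_of E i x).symm
    simp [U, this]
  have hinner : ∀ i (x : E i) j (y : E j), ⟪f i x, f j y⟫_𝕜 = ⟪(x : V), y⟫_𝕜 := by
    intro i x j y
    obtain rfl | hij := eq_or_ne i j
    · exact (f i).inner_map_map x y
    · exact (hf hij x y).trans (hE hij x y).symm
  refine ⟨U, ext_of_iSup_eq_top hEtop fun i x hx => ext_inner_right 𝕜 fun y => ?_, hU⟩
  suffices innerₛₗ 𝕜 (U x) ∘ₗ U = innerₛₗ 𝕜 x by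
    simpa [adjoint_inner_left] using congr($this y)
  exact ext_of_iSup_eq_top hEtop fun j y hy => by
    simpa [hU i ⟨x, hx⟩, hU j ⟨y, hy⟩] using hinner i ⟨x, hx⟩ j ⟨y, hy⟩

end Unitary

theorem spectrum_symmetric_admits_anticommuting_partner_general
    {V : Type*} [NormedAddCommGroup V] [InnerProductSpace ℂ V]
    [FiniteDimensional ℂ V] (U₁ : V →ₗ[ℂ] V)
    (hU₁ : adjoint U₁ * U₁ = 1)
    (hsym : ∀ lam : ℂ, Module.End.HasEigenvalue U₁ lam →
      Module.End.HasEigenvalue U₁ (-lam) ∧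
      Module.finrank ℂ (Module.End.eigenspace U₁ lam) =
        Module.finrank ℂ (Module.End.eigenspace U₁ (-lam))) :
    ∃ U₂ : V →ₗ[ℂ] V, adjoint U₂ * U₂ = 1 ∧ U₂ * adjoint U₂ = 1 ∧
      U₁ * U₂ + U₂ * U₁ = 0 := by
  have : IsStarNormal U₁ := ⟨hU₁.trans (mul_eq_one_comm.mp hU₁).symm⟩
  have htop := iSup_eigenspace_eq_top_of_isStarNormal U₁
  have horth := orthogonalFamily_eigenspaces_of_adjoint_mul_self_eq_one hU₁
  have hrank (μ : ℂ) :
      Module.finrank ℂ (eigenspace U₁ μ) = Module.finrank ℂ (eigenspace U₁ (-μ)) := by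
    by_cases hμ : HasEigenvalue U₁ μ
    · exact (hsym μ hμ).2
    have hμ' : ¬ HasEigenvalue U₁ (-μ) := fun h => hμ (by simpa using (hsym _ h).1)
    rw [hasEigenvalue_iff, not_not] at hμ hμ'
    rw [hμ, hμ']
  let e (μ : ℂ) : eigenspace U₁ μ ≃ₗᵢ[ℂ] eigenspace U₁ (-μ) :=
    (LinearIsometryEquiv.nonempty_of_finrank_eq (hrank μ)).some
  obtain ⟨U₂, hU₂, hU₂e⟩ := horth.exists_adjoint_mul_self_eq_one_of_iSup_eq_top htop
    (f := fun μ => (eigenspace U₁ (-μ)).subtypeₗᵢ.comp (e μ).toLinearIsometry)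
    fun μ ν hμν x y => horth (neg_injective.ne hμν) (e μ x) (e ν y)
  refine ⟨U₂, hU₂, mul_eq_one_comm.mp hU₂,
    mul_add_mul_eq_zero_of_mapsTo_eigenspace_neg htop fun μ x hx => ?_⟩
  rw [show x = (⟨x, hx⟩ : eigenspace U₁ μ) from rfl, hU₂e]
  exact (e μ ⟨x, hx⟩).2

theorem spectrum_symmetric_admits_anticommuting_partner
    {V : Type*} [NormedAddCommGroup V] [InnerProductSpace ℂ V]
    [FiniteDimensional ℂ V] (U₁ : V →ₗ[ℂ] V)
    (hU₁ : adjoint U₁ * U₁ = 1) (hU₁' : U₁ * adjoint U₁ = 1)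
    (hsym : ∀ lam : ℂ, Module.End.HasEigenvalue U₁ lam →
      Module.End.HasEigenvalue U₁ (-lam) ∧
      Module.finrank ℂ (Module.End.eigenspace U₁ lam) =
        Module.finrank ℂ (Module.End.eigenspace U₁ (-lam))) :
    ∃ U₂ : V →ₗ[ℂ] V, adjoint U₂ * U₂ = 1 ∧ U₂ * adjoint U₂ = 1 ∧
      U₁ * U₂ + U₂ * U₁ = 0 :=
  spectrum_symmetric_admits_anticommuting_partner_general U₁ hU₁ hsym
end

section
/- A unitary operator on a finite-dimensional complex inner product space admits an anticommuting unitary partner if and only if its characteristic polynomial is an even or odd function, equivalently, for each eigenvalue λ the multiplicity of λ equals the multiplicity of -λ. In particular, the dimension of the space must be even. -/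
/-!
An anticommuting unitary `U₂` maps the `λ`-eigenspace of `U₁` isomorphically onto the
`-λ`-eigenspace, and taking determinants in `U₁ U₂ = -U₂ U₁` gives `(-1) ^ dim V = 1`.
Conversely, a unitary operator is normal, so it has an orthonormal eigenbasis; when the
multiplicities of `λ` and `-λ` agree, some permutation of this basis negates the eigenvalues,
and the unitary realising that permutation anticommutes with `U₁`. For a normal operator the
eigenspaces are the generalised eigenspaces, so the multiplicities are the root multiplicities of
the characteristic polynomial `p`; over `ℂ`, `p.comp (-X) = ± p` exactly when the roots of `p`
are symmetric under negation.
-/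

open LinearMap Polynomial Module.End
open scoped InnerProductSpace ComplexConjugate Finset

namespace Polynomial

theorem rootMultiplicity_comp_neg_X {R : Type*} [CommRing R] [IsDomain R] (p : R[X]) (c : R) :
    (p.comp (-X)).rootMultiplicity c = p.rootMultiplicity (-c) := by
  simpa using p.rootMultiplicity_comp_C_mul_X_add_C (-1) 0 c isUnit_one.neg

theorem comp_neg_X_eq_C_neg_one_pow_mul {K : Type*} [Field K] [IsAlgClosed K] {p : K[X]}
    (hp : ∀ c, p.rootMultiplicity c = p.rootMultiplicity (-c)) :
    p.comp (-X) = C ((-1) ^ p.natDegree) * p := by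
  classical
  have hroots : (p.comp (-X)).roots = p.roots := by
    refine Multiset.ext.mpr fun c => ?_
    rw [count_roots, count_roots, rootMultiplicity_comp_neg_X, ← hp]
  have hlc : (p.comp (-X)).leadingCoeff = (-1) ^ p.natDegree * p.leadingCoeff := by
    rw [leadingCoeff_comp (by simp), leadingCoeff_neg, leadingCoeff_X, mul_comm]
  rw [(IsAlgClosed.splits (p.comp (-X))).eq_prod_roots, hroots, hlc, C_mul, mul_assoc,
    ← (IsAlgClosed.splits p).eq_prod_roots]

theorem comp_neg_X_eq_or_eq_neg_iff {K : Type*} [Field K] [IsAlgClosed K] {p : K[X]} :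
    (p.comp (-X) = p ∨ p.comp (-X) = -p) ↔
      ∀ c, p.rootMultiplicity c = p.rootMultiplicity (-c) := by
  classical
  constructor
  · rintro h c
    rw [← rootMultiplicity_comp_neg_X]
    rcases h with h | h
    · rw [h]
    · rw [h, ← count_roots, ← count_roots, roots_neg]
  · intro hp
    rw [comp_neg_X_eq_C_neg_one_pow_mul hp]
    rcases p.natDegree.even_or_odd with h | h
    · simp [h.neg_one_pow]
    · simp [h.neg_one_pow]

end Polynomial

namespace Module.End

variable {R M : Type*} [CommRing R] [AddCommGroup M] [Module R M]

theorem mapsTo_eigenspace_neg_of_anticommute {A B : End R M} (h : A * B + B * A = 0) (c : R) :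
    Set.MapsTo B (A.eigenspace c) (A.eigenspace (-c)) := by
  intro v hv
  rw [SetLike.mem_coe, mem_eigenspace_iff] at hv ⊢
  have hv' : A (B v) + B (A v) = 0 := congr($h v)
  rw [hv, map_smul, ← eq_neg_iff_add_eq_zero] at hv'
  rw [hv', neg_smul]

theorem finrank_eigenspace_neg_of_anticommute {A : End R M} (B : (End R M)ˣ)
    (h : A * B + B * A = 0) (c : R) :
    Module.finrank R (A.eigenspace (-c)) = Module.finrank R (A.eigenspace c) := by
  have h_inv : A * ↑B⁻¹ + ↑B⁻¹ * A = 0 := by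
    calc A * ↑B⁻¹ + ↑B⁻¹ * A = ↑B⁻¹ * (A * B + B * A) * ↑B⁻¹ := by
          simp only [mul_add, add_mul, mul_assoc, Units.mul_inv, mul_one, Units.inv_mul_cancel_left]
          abel
      _ = 0 := by rw [h, mul_zero, zero_mul]
  have hB_inv := mapsTo_eigenspace_neg_of_anticommute h_inv (-c)
  rw [neg_neg] at hB_inv
  exact (LinearEquiv.ofLinearMap (LinearMap.restrict (↑B⁻¹) fun _ hv => hB_inv hv)
    (LinearMap.restrict (↑B) fun _ hv => mapsTo_eigenspace_neg_of_anticommute h c hv)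
    (by ext; simp [← Module.End.mul_apply]) (by ext; simp [← Module.End.mul_apply])).finrank_eq

theorem even_finrank_of_anticommute {K V : Type*} [Field K] [AddCommGroup V] [Module K V]
    [FiniteDimensional K V] (hK : (-1 : K) ≠ 1) {A B : End K V} (hA : IsUnit A) (hB : IsUnit B)
    (h : A * B + B * A = 0) : Even (Module.finrank K V) := by
  have hdet : A.det * B.det = (-1) ^ Module.finrank K V * (B.det * A.det) := by
    rw [← map_mul, ← map_mul, ← LinearMap.det_smul, neg_one_smul, eq_neg_of_add_eq_zero_left h]
  have hAB : A.det * B.det ≠ 0 :=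
    mul_ne_zero (hA.map LinearMap.det).ne_zero (hB.map LinearMap.det).ne_zero
  rw [mul_comm B.det, eq_comm, mul_eq_right₀ hAB] at hdet
  exact (neg_one_pow_eq_one_iff_even hK).mp hdet

end Module.End

theorem Fintype.exists_perm_comp_eq_of_card_filter_eq {ι α : Type*} [Fintype ι] [DecidableEq α]
    {f g : ι → α} (h : ∀ a, #{i | f i = a} = #{i | g i = a}) :
    ∃ σ : Equiv.Perm ι, ∀ i, f (σ i) = g i := by
  have e : ∀ a, {i // g i = a} ≃ {i // f i = a} := fun a =>
    Fintype.equivOfCardEq (by rw [Fintype.card_subtype, Fintype.card_subtype, h])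
  exact ⟨Equiv.ofFiberEquiv e, Equiv.ofFiberEquiv_map e⟩

section

variable {𝕜 E : Type*} [RCLike 𝕜] [NormedAddCommGroup E] [InnerProductSpace 𝕜 E]
  [FiniteDimensional 𝕜 E]

theorem LinearIsometryEquiv.toLinearMap_mem_unitary (e : E ≃ₗᵢ[𝕜] E) :
    e.toLinearMap ∈ unitary (E →ₗ[𝕜] E) := by
  rw [Unitary.mem_iff, star_eq_adjoint, adjoint_toLinearMap_eq_symm]
  constructor <;> ext <;> simp

theorem OrthonormalBasis.exists_unitary_anticommute_of_perm {ι : Type*} [Fintype ι]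
    {T : E →ₗ[𝕜] E} (b : OrthonormalBasis ι 𝕜 E) {μ : ι → 𝕜} (hμ : ∀ i, T (b i) = μ i • b i)
    (σ : Equiv.Perm ι) (hσ : ∀ i, μ (σ i) = -μ i) :
    ∃ U ∈ unitary (E →ₗ[𝕜] E), T * U + U * T = 0 := by
  refine ⟨_, (b.equiv b σ).toLinearMap_mem_unitary, b.toBasis.ext fun i => ?_⟩
  simp [hμ, hσ]

end

theorem IsStarNormal.sub_smul_one {R A : Type*} [CommSemiring R] [StarRing R] [Ring A]
    [StarRing A] [Algebra R A] [StarModule R A] {a : A} (ha : IsStarNormal a) (c : R) :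
    IsStarNormal (a - c • 1) := by
  have : Commute a (star (c • 1)) := by
    rw [star_smul, star_one]
    exact (Commute.one_right a).smul_right _
  exact this.isStarNormal_sub

namespace LinearMap.IsStarNormal

section RCLike

variable {𝕜 E : Type*} [RCLike 𝕜] [NormedAddCommGroup E] [InnerProductSpace 𝕜 E]
  [FiniteDimensional 𝕜 E] {T : E →ₗ[𝕜] E}

theorem ker_adjoint_eq_ker (hT : IsStarNormal T) : ker (adjoint T) = ker T := by
  ext v
  have hnorm : ⟪adjoint T v, adjoint T v⟫_𝕜 = ⟪T v, T v⟫_𝕜 := by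
    rw [adjoint_inner_left, ← Module.End.mul_apply, ← star_eq_adjoint, ← hT.star_comm_self,
      Module.End.mul_apply, star_eq_adjoint, adjoint_inner_right]
  rw [mem_ker, mem_ker, ← inner_self_eq_zero (𝕜 := 𝕜), hnorm, inner_self_eq_zero]

theorem ker_pow_le_ker (hT : IsStarNormal T) (k : ℕ) : ker (T ^ k) ≤ ker T := by
  induction k with
  | zero => rw [pow_zero, Module.End.one_eq_id, ker_id]; exact bot_le
  | succ k ih =>
    intro v hv
    have hTTv : T (T v) = 0 := ih (by simpa [pow_succ] using hv)
    have hadj : adjoint T (T v) = 0 := by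
      rw [← mem_ker, ker_adjoint_eq_ker hT]
      exact hTTv
    rw [mem_ker, ← inner_self_eq_zero (𝕜 := 𝕜), ← adjoint_inner_right, hadj, inner_zero_right]

theorem maxGenEigenspace_eq_eigenspace (hT : IsStarNormal T) (c : 𝕜) :
    maxGenEigenspace T c = eigenspace T c := by
  refine le_antisymm (fun v hv => ?_) (genEigenspace_le_maximal T c 1)
  obtain ⟨k, hk⟩ := (mem_maxGenEigenspace T c v).mp hv
  rw [eigenspace_def]
  exact ker_pow_le_ker (hT.sub_smul_one c) k hk

theorem adjoint_apply_of_mem_eigenspace (hT : IsStarNormal T) {c : 𝕜} {v : E}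
    (hv : v ∈ eigenspace T c) : adjoint T v = conj c • v := by
  rw [eigenspace_def, ← ker_adjoint_eq_ker (hT.sub_smul_one c), mem_ker, ← star_eq_adjoint]
    at hv
  simpa [sub_eq_zero, star_eq_adjoint] using hv

theorem orthogonalFamily_eigenspaces (hT : IsStarNormal T) :
    OrthogonalFamily 𝕜 (fun c => eigenspace T c) fun c => (eigenspace T c).subtypeₗᵢ := by
  rintro a b hab ⟨v, hv⟩ ⟨w, hw⟩
  have h : b * ⟪v, w⟫_𝕜 = a * ⟪v, w⟫_𝕜 := by
    rw [← inner_smul_right, ← mem_eigenspace_iff.mp hw, ← adjoint_inner_left,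
      adjoint_apply_of_mem_eigenspace hT hv, inner_smul_left, RCLike.conj_conj]
  exact (mul_eq_mul_right_iff.mp h).resolve_left hab.symm

theorem finrank_eigenspace_eq_rootMultiplicity (hT : IsStarNormal T) (c : 𝕜) :
    Module.finrank 𝕜 (eigenspace T c) = T.charpoly.rootMultiplicity c := by
  rw [← maxGenEigenspace_eq_eigenspace hT, finrank_maxGenEigenspace_eq]

theorem orthogonalFamily_eigenspaces' (hT : IsStarNormal T) :
    OrthogonalFamily 𝕜 (fun c : Eigenvalues T => eigenspace T c)
      fun c => (eigenspace T c).subtypeₗᵢ :=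
  (orthogonalFamily_eigenspaces hT).comp Subtype.coe_injective

end RCLike

variable {E : Type*} [NormedAddCommGroup E] [InnerProductSpace ℂ E] [FiniteDimensional ℂ E]
  {T : E →ₗ[ℂ] E}

theorem directSum_isInternal (hT : IsStarNormal T) :
    DirectSum.IsInternal fun c : Eigenvalues T => eigenspace T c := by
  classical
  refine (orthogonalFamily_eigenspaces' hT).isInternal_iff.mpr ?_
  have hspan : ⨆ c, eigenspace T c = ⊤ := by
    simpa only [maxGenEigenspace_eq_eigenspace hT] using iSup_maxGenEigenspace_eq_top T
  rw [Submodule.orthogonal_eq_bot_iff]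
  exact (iSup_ne_bot_subtype (eigenspace T)).trans hspan

theorem exists_orthonormalBasis_eigenvectors (hT : IsStarNormal T) :
    ∃ (b : OrthonormalBasis (Fin (Module.finrank ℂ E)) ℂ E) (μ : Fin (Module.finrank ℂ E) → ℂ),
      (∀ i, T (b i) = μ i • b i) ∧
      ∀ c, #{i | μ i = c} = Module.finrank ℂ (eigenspace T c) := by
  classical
  have hint := directSum_isInternal hT
  have horth := orthogonalFamily_eigenspaces' hT
  refine ⟨hint.subordinateOrthonormalBasis rfl horth,
    fun i => Eigenvalues.val T (hint.subordinateOrthonormalBasisIndex rfl i horth),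
    fun i => ?_, fun c => ?_⟩
  · exact mem_eigenspace_iff.mp (hint.subordinateOrthonormalBasis_subordinate rfl i horth)
  · by_cases hc : HasEigenvalue T c
    · refine .trans (congrArg Finset.card (Finset.ext fun i => ?_))
        (hint.card_filter_subordinateOrthonormalBasisIndex_eq rfl horth ⟨c, hc⟩)
      simp only [Finset.mem_filter, Finset.mem_univ, true_and]
      exact ⟨fun h => Subtype.ext h, fun h => by rw [h]; rfl⟩
    · rw [not_not.mp (hasEigenvalue_iff.not.mp hc), finrank_bot, Finset.card_eq_zero,
        Finset.filter_eq_empty_iff]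
      rintro i - rfl
      exact hc (hint.subordinateOrthonormalBasisIndex rfl i horth).2

theorem exists_unitary_anticommute_of_finrank_eigenspace_neg (hT : IsStarNormal T)
    (h : ∀ c, Module.finrank ℂ (eigenspace T c) = Module.finrank ℂ (eigenspace T (-c))) :
    ∃ U ∈ unitary (E →ₗ[ℂ] E), T * U + U * T = 0 := by
  obtain ⟨b, μ, hμ, hcard⟩ := exists_orthonormalBasis_eigenvectors hT
  obtain ⟨σ, hσ⟩ := Fintype.exists_perm_comp_eq_of_card_filter_eq (f := μ) (g := fun i => -μ i)
    fun c => by simp only [neg_eq_iff_eq_neg]; rw [hcard, hcard, h]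
  exact b.exists_unitary_anticommute_of_perm hμ σ hσ

end LinearMap.IsStarNormal

theorem anticommuting_partner_iff_spectrum_symmetric
    {V : Type*} [NormedAddCommGroup V] [InnerProductSpace ℂ V]
    [FiniteDimensional ℂ V] (U₁ : V →ₗ[ℂ] V)
    (hU₁ : adjoint U₁ * U₁ = 1) (hU₁' : U₁ * adjoint U₁ = 1) :
    ((∃ U₂ : V →ₗ[ℂ] V, adjoint U₂ * U₂ = 1 ∧ U₂ * adjoint U₂ = 1 ∧
        U₁ * U₂ + U₂ * U₁ = 0) ↔
      (U₁.charpoly.comp (-X) = U₁.charpoly ∨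
        U₁.charpoly.comp (-X) = -U₁.charpoly)) ∧
    ((∃ U₂ : V →ₗ[ℂ] V, adjoint U₂ * U₂ = 1 ∧ U₂ * adjoint U₂ = 1 ∧
        U₁ * U₂ + U₂ * U₁ = 0) ↔
      (∀ lam : ℂ, Module.finrank ℂ (Module.End.eigenspace U₁ lam) =
        Module.finrank ℂ (Module.End.eigenspace U₁ (-lam)))) ∧
    ((∃ U₂ : V →ₗ[ℂ] V, adjoint U₂ * U₂ = 1 ∧ U₂ * adjoint U₂ = 1 ∧
        U₁ * U₂ + U₂ * U₁ = 0) → Even (Module.finrank ℂ V)) := by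
  have hU₁_normal : IsStarNormal U₁ := isStarNormal_of_mem_unitary ⟨hU₁, hU₁'⟩
  have partner_iff : (∃ U₂ : V →ₗ[ℂ] V, adjoint U₂ * U₂ = 1 ∧ U₂ * adjoint U₂ = 1 ∧
      U₁ * U₂ + U₂ * U₁ = 0) ↔ ∃ U₂ ∈ unitary (V →ₗ[ℂ] V), U₁ * U₂ + U₂ * U₁ = 0 := by
    simp only [Unitary.mem_iff, star_eq_adjoint, and_assoc]
  have multiplicities_iff_charpoly : (∀ lam : ℂ, Module.finrank ℂ (eigenspace U₁ lam) =
      Module.finrank ℂ (eigenspace U₁ (-lam))) ↔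
      (U₁.charpoly.comp (-X) = U₁.charpoly ∨ U₁.charpoly.comp (-X) = -U₁.charpoly) := by
    simp only [hU₁_normal.finrank_eigenspace_eq_rootMultiplicity]
    exact comp_neg_X_eq_or_eq_neg_iff.symm
  have partner_iff_multiplicities : (∃ U₂ ∈ unitary (V →ₗ[ℂ] V), U₁ * U₂ + U₂ * U₁ = 0) ↔
      ∀ lam : ℂ, Module.finrank ℂ (eigenspace U₁ lam) =
        Module.finrank ℂ (eigenspace U₁ (-lam)) :=
    ⟨fun ⟨U₂, hU₂, h⟩ lam =>
      (finrank_eigenspace_neg_of_anticommute (Unitary.toUnits ⟨U₂, hU₂⟩) h lam).symm,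
      hU₁_normal.exists_unitary_anticommute_of_finrank_eigenspace_neg⟩
  rw [partner_iff]
  refine ⟨partner_iff_multiplicities.trans multiplicities_iff_charpoly,
    partner_iff_multiplicities, fun ⟨U₂, hU₂, h⟩ => ?_⟩
  exact even_finrank_of_anticommute (by norm_num) (Unitary.isUnit_coe (U := ⟨U₁, hU₁, hU₁'⟩))
    (Unitary.isUnit_coe (U := ⟨U₂, hU₂⟩)) h
end

section
/- If a unitary operator U₁ on a nonzero finite-dimensional complex inner product space admits a unitary anticommuting partner, then the dimension of the space is even. -/
open LinearMap Module

theorem LinearMap.det_ne_zero_of_mul_eq_one {R M : Type*} [CommRing R] [Nontrivial R]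
    [AddCommGroup M] [Module R M] {A B : End R M} (h : A * B = 1) : LinearMap.det B ≠ 0 :=
  right_ne_zero_of_mul_eq_one (by rw [← map_mul, h, map_one])

theorem Module.End.even_finrank_of_mul_add_mul_eq_zero {K V : Type*} [Field K] [AddCommGroup V]
    [Module K V] (hK : ringChar K ≠ 2) {A B : End K V} (hA : LinearMap.det A ≠ 0)
    (hB : LinearMap.det B ≠ 0) (hAB : A * B + B * A = 0) : Even (finrank K V) := by
  have hdet : 1 * (LinearMap.det A * LinearMap.det B) =
      (-1 : K) ^ finrank K V * (LinearMap.det A * LinearMap.det B) :=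
    calc 1 * (LinearMap.det A * LinearMap.det B) = LinearMap.det (A * B) := by
          rw [one_mul, map_mul]
      _ = LinearMap.det ((-1 : K) • (B * A)) := by rw [eq_neg_of_add_eq_zero_left hAB, neg_one_smul]
      _ = (-1 : K) ^ finrank K V * (LinearMap.det A * LinearMap.det B) := by
        rw [det_smul, map_mul, mul_comm (LinearMap.det B)]
  rw [← neg_one_pow_eq_one_iff_even (Ring.neg_one_ne_one_of_char_ne_two hK)]
  exact (mul_right_cancel₀ (mul_ne_zero hA hB) hdet).symm

theorem anticommuting_partner_implies_even_dim_general
    {V : Type*} [NormedAddCommGroup V] [InnerProductSpace ℂ V]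
    [FiniteDimensional ℂ V]
    (U₁ U₂ : V →ₗ[ℂ] V)
    (hU₁ : adjoint U₁ * U₁ = 1)
    (hU₂ : adjoint U₂ * U₂ = 1)
    (hanti : U₁ * U₂ + U₂ * U₁ = 0) :
    Even (Module.finrank ℂ V) :=
  End.even_finrank_of_mul_add_mul_eq_zero (by simp [ringChar.eq_zero])
    (det_ne_zero_of_mul_eq_one hU₁) (det_ne_zero_of_mul_eq_one hU₂) hanti

theorem anticommuting_partner_implies_even_dim
    {V : Type*} [NormedAddCommGroup V] [InnerProductSpace ℂ V]
    [FiniteDimensional ℂ V] (hdim : 0 < Module.finrank ℂ V)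
    (U₁ U₂ : V →ₗ[ℂ] V)
    (hU₁ : adjoint U₁ * U₁ = 1) (hU₁' : U₁ * adjoint U₁ = 1)
    (hU₂ : adjoint U₂ * U₂ = 1) (hU₂' : U₂ * adjoint U₂ = 1)
    (hanti : U₁ * U₂ + U₂ * U₁ = 0) :
    Even (Module.finrank ℂ V) :=
  anticommuting_partner_implies_even_dim_general U₁ U₂ hU₁ hU₂ hanti
end

section
/- For the Pauli Peres-Mermin square, for every density matrix ρ on ℂ⁴, the quantity Tr(ρ·A₁₁A₁₂A₁₃) + Tr(ρ·A₂₁A₂₂A₂₃) + Tr(ρ·A₃₁A₃₂A₃₃) + Tr(ρ·A₁₁A₂₁A₃₁) + Tr(ρ·A₁₂A₂₂A₃₂) - Tr(ρ·A₁₃A₂₃A₃₃) equals 6. -/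
open Matrix Kronecker Complex
open scoped ComplexOrder

noncomputable def pauliX : Matrix (Fin 2) (Fin 2) ℂ := !![0, 1; 1, 0]
noncomputable def pauliY : Matrix (Fin 2) (Fin 2) ℂ := !![0, -I; I, 0]
noncomputable def pauliZ : Matrix (Fin 2) (Fin 2) ℂ := !![1, 0; 0, -1]

/-!
Each row and column of the Peres–Mermin square consists of commuting Pauli observables whose
product is `±1`: the five products in the sum are `1` and the one subtracted is `-1`. Hence
every summand is `± Tr ρ = ± 1`, with the signs arranged so that all six contribute `+1`.
-/

lemma pauliX_mul_self : pauliX * pauliX = 1 := by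
  simp [pauliX, Matrix.one_fin_two]

lemma pauliZ_mul_self : pauliZ * pauliZ = 1 := by
  simp [pauliZ, Matrix.one_fin_two]

lemma pauliX_mul_pauliZ_mul_pauliY : pauliX * pauliZ * pauliY = (-I) • 1 := by
  ext i j
  fin_cases i <;> fin_cases j <;> simp [pauliX, pauliY, pauliZ]

lemma pauliZ_mul_pauliX_mul_pauliY : pauliZ * pauliX * pauliY = I • 1 := by
  ext i j
  fin_cases i <;> fin_cases j <;> simp [pauliX, pauliY, pauliZ]

lemma kronecker_mul_kronecker_mul_kronecker {R l m n o p q r s : Type*} [CommSemiring R]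
    [Fintype m] [Fintype n] [Fintype q] [Fintype r]
    (A : Matrix l m R) (B : Matrix m n R) (C : Matrix n o R)
    (A' : Matrix p q R) (B' : Matrix q r R) (C' : Matrix r s R) :
    (A ⊗ₖ A') * (B ⊗ₖ B') * (C ⊗ₖ C') = (A * B * C) ⊗ₖ (A' * B' * C') := by
  rw [← mul_kronecker_mul, ← mul_kronecker_mul]

noncomputable def peresMerminSquare : Fin 3 → Fin 3 → Matrix (Fin 2 × Fin 2) (Fin 2 × Fin 2) ℂ :=
  ![![pauliX ⊗ₖ 1, 1 ⊗ₖ pauliX, pauliX ⊗ₖ pauliX],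
    ![1 ⊗ₖ pauliZ, pauliZ ⊗ₖ 1, pauliZ ⊗ₖ pauliZ],
    ![pauliX ⊗ₖ pauliZ, pauliZ ⊗ₖ pauliX, pauliY ⊗ₖ pauliY]]

local notation "𝒜" => peresMerminSquare

lemma peresMerminSquare_row_prod (i : Fin 3) : 𝒜 i 0 * 𝒜 i 1 * 𝒜 i 2 = 1 := by
  fin_cases i <;>
    simp only [peresMerminSquare, kronecker_mul_kronecker_mul_kronecker, Fin.zero_eta,
      Fin.mk_one, Fin.reduceFinMk, Matrix.cons_val, one_mul, mul_one, pauliX_mul_self,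
      pauliZ_mul_self, one_kronecker_one]
  rw [pauliX_mul_pauliZ_mul_pauliY, pauliZ_mul_pauliX_mul_pauliY, smul_kronecker,
    kronecker_smul, one_kronecker_one, smul_smul, neg_mul, I_mul_I, neg_neg, one_smul]

lemma peresMerminSquare_col_prod_of_ne_two (j : Fin 3) (hj : j ≠ 2) :
    𝒜 0 j * 𝒜 1 j * 𝒜 2 j = 1 := by
  fin_cases j <;> first
    | exact absurd rfl hj
    | simp only [peresMerminSquare, kronecker_mul_kronecker_mul_kronecker, Fin.zero_eta,
        Fin.mk_one, Matrix.cons_val, one_mul, mul_one, pauliX_mul_self, pauliZ_mul_self,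
        one_kronecker_one]

lemma peresMerminSquare_col_prod_two : 𝒜 0 2 * 𝒜 1 2 * 𝒜 2 2 = -1 := by
  simp only [peresMerminSquare, kronecker_mul_kronecker_mul_kronecker, Matrix.cons_val, pauliX_mul_pauliZ_mul_pauliY, smul_kronecker, kronecker_smul,
    one_kronecker_one, smul_smul, neg_mul_neg, I_mul_I, neg_one_smul]

theorem pauli_peres_mermin_quantum_value_general
    (ρ : Matrix (Fin 2 × Fin 2) (Fin 2 × Fin 2) ℂ)
    (htr : ρ.trace = 1) :
    let A : Fin 3 → Fin 3 → Matrix (Fin 2 × Fin 2) (Fin 2 × Fin 2) ℂ :=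
      ![![pauliX ⊗ₖ 1, 1 ⊗ₖ pauliX, pauliX ⊗ₖ pauliX],
        ![1 ⊗ₖ pauliZ, pauliZ ⊗ₖ 1, pauliZ ⊗ₖ pauliZ],
        ![pauliX ⊗ₖ pauliZ, pauliZ ⊗ₖ pauliX, pauliY ⊗ₖ pauliY]]
    (ρ * (A 0 0 * A 0 1 * A 0 2)).trace + (ρ * (A 1 0 * A 1 1 * A 1 2)).trace +
      (ρ * (A 2 0 * A 2 1 * A 2 2)).trace + (ρ * (A 0 0 * A 1 0 * A 2 0)).trace +
      (ρ * (A 0 1 * A 1 1 * A 2 1)).trace - (ρ * (A 0 2 * A 1 2 * A 2 2)).trace = 6 := by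
  intro A
  change (ρ * (𝒜 0 0 * 𝒜 0 1 * 𝒜 0 2)).trace + (ρ * (𝒜 1 0 * 𝒜 1 1 * 𝒜 1 2)).trace +
      (ρ * (𝒜 2 0 * 𝒜 2 1 * 𝒜 2 2)).trace + (ρ * (𝒜 0 0 * 𝒜 1 0 * 𝒜 2 0)).trace +
      (ρ * (𝒜 0 1 * 𝒜 1 1 * 𝒜 2 1)).trace - (ρ * (𝒜 0 2 * 𝒜 1 2 * 𝒜 2 2)).trace = 6
  rw [peresMerminSquare_row_prod, peresMerminSquare_row_prod, peresMerminSquare_row_prod,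
    peresMerminSquare_col_prod_of_ne_two 0 (by decide),
    peresMerminSquare_col_prod_of_ne_two 1 (by decide), peresMerminSquare_col_prod_two,
    Matrix.mul_neg, mul_one, trace_neg, htr]
  norm_num

theorem pauli_peres_mermin_quantum_value
    (ρ : Matrix (Fin 2 × Fin 2) (Fin 2 × Fin 2) ℂ)
    (hρ : ρ.PosSemidef) (htr : ρ.trace = 1) :
    let A : Fin 3 → Fin 3 → Matrix (Fin 2 × Fin 2) (Fin 2 × Fin 2) ℂ :=
      ![![pauliX ⊗ₖ 1, 1 ⊗ₖ pauliX, pauliX ⊗ₖ pauliX],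
        ![1 ⊗ₖ pauliZ, pauliZ ⊗ₖ 1, pauliZ ⊗ₖ pauliZ],
        ![pauliX ⊗ₖ pauliZ, pauliZ ⊗ₖ pauliX, pauliY ⊗ₖ pauliY]]
    (ρ * (A 0 0 * A 0 1 * A 0 2)).trace + (ρ * (A 1 0 * A 1 1 * A 1 2)).trace +
      (ρ * (A 2 0 * A 2 1 * A 2 2)).trace + (ρ * (A 0 0 * A 1 0 * A 2 0)).trace +
      (ρ * (A 0 1 * A 1 1 * A 2 1)).trace - (ρ * (A 0 2 * A 1 2 * A 2 2)).trace = 6 :=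
  pauli_peres_mermin_quantum_value_general ρ htr
end

section
/- Suppose U₁, U₂, U₃ are unitary operators on a 2n-dimensional complex Hilbert space that pairwise anticommute and satisfy U₁U₂U₃ = i·id. Then there exists an orthonormal basis in which U₁ is block diagonal with 2×2 blocks λᵢσz, U₂ is block diagonal with blocks λᵢ'σx, and U₃ is block diagonal with blocks (λᵢλᵢ')*σy, for some unit-modulus complex numbers λᵢ, λᵢ'. -/
open Matrix Complex

/-!
Write `T`, `S` for `U₁`, `U₂` acting on `ℂ^{2n}`. Since `S` anticommutes with `T`, `S²` commutes
with `T`, so they share a unit eigenvector `v`: `T v = λ v`, `S² v = μ v`. With `λ'² = μ` and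
`w = λ'⁻¹ S v` one gets `T w = -λ w`, `S v = λ' w`, `S w = λ' v`, and `v ⊥ w` because `λ ≠ -λ` are
eigenvalues of an isometry. The plane spanned by `v, w` is invariant under both isometries, hence so
is its orthogonal complement, and induction on `n` yields an orthonormal basis of such pairs. The
third unitary is then forced: `U₃ = i (U₁ U₂)⋆`, and `i (λσz · λ'σx)⋆ = (λλ')⋆ σy`.
-/

open Module

namespace Module.End

variable {K V : Type*} [Field K] [IsAlgClosed K] [AddCommGroup V] [Module K V]
  [FiniteDimensional K V] [Nontrivial V]

theorem exists_common_eigenvector {f g : End K V} (h : Commute f g) :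
    ∃ v ≠ 0, ∃ a b : K, f v = a • v ∧ g v = b • v := by
  obtain ⟨a, ha⟩ := exists_eigenvalue f
  have : Nontrivial (f.eigenspace a) := Submodule.nontrivial_iff_ne_bot.mpr ha
  have hg : ∀ x ∈ f.eigenspace a, g x ∈ f.eigenspace a := mapsTo_genEigenspace_of_comm h a 1
  obtain ⟨b, hb⟩ := exists_eigenvalue (g.restrict hg)
  obtain ⟨⟨v, hv⟩, hvb, hv0⟩ := hb.exists_hasEigenvector
  refine ⟨v, fun h0 => hv0 (Subtype.ext h0), a, b, mem_eigenspace_iff.mp hv, ?_⟩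
  simpa using congrArg Subtype.val (mem_eigenspace_iff.mp hvb)

end Module.End

namespace LinearIsometry

variable {𝕜 V : Type*} [RCLike 𝕜] [NormedAddCommGroup V] [InnerProductSpace 𝕜 V]

def restrict (T : V →ₗᵢ[𝕜] V) {p : Submodule 𝕜 V} (hp : ∀ x ∈ p, T x ∈ p) :
    p →ₗᵢ[𝕜] p :=
  { T.toLinearMap.restrict hp with norm_map' := fun x => T.norm_map x }

theorem norm_eq_one_of_apply_eq_smul (T : V →ₗᵢ[𝕜] V) {x : V} {a : 𝕜} (hx : x ≠ 0)
    (h : T x = a • x) : ‖a‖ = 1 := by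
  have := T.norm_map x
  rw [h, norm_smul] at this
  exact (mul_eq_right₀ (norm_ne_zero_iff.mpr hx)).mp this

theorem inner_eq_zero_of_apply_eq_smul (T : V →ₗᵢ[𝕜] V) {x y : V} {a b : 𝕜} (ha : ‖a‖ = 1)
    (hab : a ≠ b) (hx : T x = a • x) (hy : T y = b • y) : inner 𝕜 x y = 0 := by
  have h := T.inner_map_map x y
  rw [hx, hy, inner_smul_left, inner_smul_right] at h
  have ha' : (starRingEnd 𝕜) a * a = 1 := by
    rw [RCLike.conj_mul, ha]; simp
  have : (starRingEnd 𝕜) a * (b - a) * inner 𝕜 x y = 0 := by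
    linear_combination h - inner 𝕜 x y * ha'
  have ha₀ : a ≠ 0 := by rintro rfl; simp at ha
  simpa [sub_eq_zero, hab.symm, ha₀] using this

theorem mapsTo_orthogonal (T : V →ₗᵢ[𝕜] V) {K : Submodule 𝕜 V} [FiniteDimensional 𝕜 K]
    (hK : ∀ x ∈ K, T x ∈ K) : ∀ x ∈ Kᗮ, T x ∈ Kᗮ := by
  intro x hx y hy
  -- `T` restricts to an injective, hence surjective, endomorphism of `K`
  obtain ⟨z, hz⟩ := LinearMap.injective_iff_surjective.mp (T.restrict hK).injective ⟨y, hy⟩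
  have hyz : y = T z := (congrArg Subtype.val hz).symm
  rw [hyz, T.inner_map_map]
  exact hx z z.2

end LinearIsometry

section MapsByMatrix

variable {R M ι : Type*} [CommSemiring R] [AddCommMonoid M] [Module R M] [Fintype ι]

def MapsByMatrix (f : M → M) (u : ι → M) (A : Matrix ι ι R) : Prop :=
  ∀ j, f (u j) = ∑ i, A i j • u i

theorem MapsByMatrix.mapsTo_span {f : M →ₗ[R] M} {u : ι → M} {A : Matrix ι ι R}
    (h : MapsByMatrix f u A) :
    ∀ x ∈ Submodule.span R (Set.range u), f x ∈ Submodule.span R (Set.range u) := by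
  have : Submodule.span R (Set.range u) ≤ (Submodule.span R (Set.range u)).comap f := by
    rw [Submodule.span_le]
    rintro _ ⟨j, rfl⟩
    rw [SetLike.mem_coe, Submodule.mem_comap, h j]
    exact Submodule.sum_mem _ fun i _ => Submodule.smul_mem _ _ (Submodule.subset_span ⟨i, rfl⟩)
  exact fun x hx => this hx

theorem MapsByMatrix.of_restrict {p : Submodule R M} {f : M → M} {g : p → p}
    (hfg : ∀ x, (g x : M) = f x) {u : ι → p} {A : Matrix ι ι R} (h : MapsByMatrix g u A) :
    MapsByMatrix f (fun i => (u i : M)) A := fun j => by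
  rw [← hfg, h j, Submodule.coe_sum]
  simp only [Submodule.coe_smul]

theorem LinearMap.toMatrix_eq_blockDiagonal {m o : Type*} [Fintype m] [Fintype o]
    [DecidableEq m] [DecidableEq o] (b : Basis (m × o) R M) (f : M →ₗ[R] M)
    (A : o → Matrix m m R) (h : ∀ k, MapsByMatrix f (fun i => b (i, k)) (A k)) :
    LinearMap.toMatrix b b f = blockDiagonal A := by
  ext ⟨i, k⟩ ⟨j, k'⟩
  rw [LinearMap.toMatrix_apply, h k' j, blockDiagonal_apply]
  rcases eq_or_ne k k' with rfl | hk <;> simp [Finsupp.single_apply, Prod.ext_iff, eq_comm, *]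

end MapsByMatrix

section Pauli

variable {M : Type*} [AddCommGroup M] [Module ℂ M]

theorem mapsByMatrix_smul_pauliZ_iff {f : M → M} {u : Fin 2 → M} {c : ℂ} :
    MapsByMatrix f u (c • pauliZ) ↔ f (u 0) = c • u 0 ∧ f (u 1) = -c • u 1 := by
  simp [MapsByMatrix, Fin.forall_fin_two, Fin.sum_univ_two, pauliZ]

theorem mapsByMatrix_smul_pauliX_iff {f : M → M} {u : Fin 2 → M} {c : ℂ} :
    MapsByMatrix f u (c • pauliX) ↔ f (u 0) = c • u 1 ∧ f (u 1) = c • u 0 := by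
  simp [MapsByMatrix, Fin.forall_fin_two, Fin.sum_univ_two, pauliX]

theorem smul_star_blockDiagonal_pauliZ_mul_pauliX {n : Type*} [Fintype n] [DecidableEq n]
    (c c' : n → ℂ) :
    I • star (blockDiagonal (fun i => c i • pauliZ) * blockDiagonal (fun i => c' i • pauliX)) =
      blockDiagonal (fun i => starRingEnd ℂ (c i * c' i) • pauliY) := by
  rw [← blockDiagonal_mul, star_eq_conjTranspose, blockDiagonal_conjTranspose,
    ← blockDiagonal_smul]
  congr 1
  funext i
  ext a b
  fin_cases a <;> fin_cases b <;> simp [pauliZ, pauliX, pauliY, mul_comm]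

end Pauli

theorem Orthonormal.pairs_cons {𝕜 V m : Type*} [RCLike 𝕜] [NormedAddCommGroup V]
    [InnerProductSpace 𝕜 V] {n : ℕ} {u : m → V} {v : Fin n → m → V} (hu : Orthonormal 𝕜 u)
    (hv : Orthonormal 𝕜 (fun p : m × Fin n => v p.2 p.1))
    (huv : ∀ k i l, inner 𝕜 (u k) (v i l) = 0) :
    Orthonormal 𝕜 (fun p : m × Fin (n + 1) => (Fin.cons u v : Fin (n + 1) → m → V) p.2 p.1) := by
  classical
  rw [orthonormal_iff_ite] at hu hv ⊢
  rintro ⟨k, i⟩ ⟨l, j⟩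
  cases i using Fin.cases <;> cases j using Fin.cases
  · simpa using hu k l
  · simpa [(Fin.succ_ne_zero _).symm] using huv k _ l
  · simpa [Fin.succ_ne_zero, inner_eq_zero_symm] using huv l _ k
  · simpa [Fin.succ_inj, and_comm] using hv (k, _) (l, _)

section AnticommutingIsometries

variable {V : Type*} [NormedAddCommGroup V] [InnerProductSpace ℂ V] [FiniteDimensional ℂ V]

theorem exists_orthonormal_pauli_pair [Nontrivial V] (T S : V →ₗᵢ[ℂ] V)
    (hTS : ∀ x, T (S x) = -S (T x)) :
    ∃ u : Fin 2 → V, Orthonormal ℂ u ∧ ∃ c c' : ℂ, ‖c‖ = 1 ∧ ‖c'‖ = 1 ∧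
      MapsByMatrix T u (c • pauliZ) ∧ MapsByMatrix S u (c' • pauliX) := by
  have hcomm : Commute T.toLinearMap (S.comp S).toLinearMap := by
    ext x
    simp [hTS]
  obtain ⟨v₀, hv₀, c, μ, hTv₀, hSSv₀⟩ := End.exists_common_eigenvector hcomm
  simp only [LinearIsometry.coe_toLinearMap, LinearIsometry.coe_comp,
    Function.comp_apply] at hTv₀ hSSv₀
  set v : V := (‖v₀‖⁻¹ : ℂ) • v₀
  have hv : ‖v‖ = 1 := norm_smul_inv_norm hv₀
  have hv0 : v ≠ 0 := norm_ne_zero_iff.mp (by rw [hv]; exact one_ne_zero)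
  have hTv : T v = c • v := by rw [map_smul, hTv₀, smul_comm]
  have hSSv : S (S v) = μ • v := by rw [map_smul, map_smul, hSSv₀, smul_comm]
  have hc : ‖c‖ = 1 := T.norm_eq_one_of_apply_eq_smul hv0 hTv
  have hc₀ : c ≠ 0 := norm_ne_zero_iff.mp (by rw [hc]; exact one_ne_zero)
  have hμ : ‖μ‖ = 1 := (S.comp S).norm_eq_one_of_apply_eq_smul hv0 hSSv
  obtain ⟨c', hc'⟩ := IsAlgClosed.exists_eq_mul_self μ
  have hc'₁ : ‖c'‖ = 1 := by
    rwa [hc', norm_mul, ← sq, pow_eq_one_iff_of_nonneg (norm_nonneg _) two_ne_zero] at hμ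
  have hc'₀ : c' ≠ 0 := norm_ne_zero_iff.mp (by rw [hc'₁]; exact one_ne_zero)
  set w : V := c'⁻¹ • S v
  have hSv : S v = c' • w := (smul_inv_smul₀ hc'₀ _).symm
  have hSw : S w = c' • v := by
    rw [map_smul, hSSv, hc', smul_smul, inv_mul_cancel_left₀ hc'₀]
  have hTw : T w = -c • w := by
    rw [map_smul, hTS, hTv, map_smul, smul_neg, neg_smul, smul_comm]
  have hw : ‖w‖ = 1 := by rw [norm_smul, S.norm_map, hv, norm_inv, hc'₁]; norm_num
  have hvw : inner ℂ v w = 0 :=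
    T.inner_eq_zero_of_apply_eq_smul hc (by simpa [self_eq_neg] using hc₀) hTv hTw
  refine ⟨![v, w], ?_, c, c', hc, hc'₁, ?_, ?_⟩
  · rw [orthonormal_iff_ite]
    simp [Fin.forall_fin_two, hvw, inner_eq_zero_symm.mp hvw, inner_self_eq_norm_sq_to_K, hv, hw]
  · exact mapsByMatrix_smul_pauliZ_iff.mpr ⟨hTv, hTw⟩
  · exact mapsByMatrix_smul_pauliX_iff.mpr ⟨hSv, hSw⟩

theorem exists_orthonormal_pauli_pairs {n : ℕ} (hV : finrank ℂ V = 2 * n)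
    (T S : V →ₗᵢ[ℂ] V) (hTS : ∀ x, T (S x) = -S (T x)) :
    ∃ (u : Fin n → Fin 2 → V) (c c' : Fin n → ℂ),
      Orthonormal ℂ (fun p : Fin 2 × Fin n => u p.2 p.1) ∧
      ∀ i, ‖c i‖ = 1 ∧ ‖c' i‖ = 1 ∧
        MapsByMatrix T (u i) (c i • pauliZ) ∧ MapsByMatrix S (u i) (c' i • pauliX) := by
  induction n generalizing V with
  | zero =>
    exact ⟨finZeroElim, finZeroElim, finZeroElim,
      ⟨fun p => p.2.elim0, fun p => p.2.elim0⟩, finZeroElim⟩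
  | succ n ih =>
    have : Nontrivial V := Module.nontrivial_of_finrank_pos (R := ℂ) (by omega)
    obtain ⟨u₀, hu₀, c₀, c₀', hc₀, hc₀', hT₀, hS₀⟩ := exists_orthonormal_pauli_pair T S hTS
    set K := Submodule.span ℂ (Set.range u₀)
    have hTK : ∀ x ∈ Kᗮ, T x ∈ Kᗮ := T.mapsTo_orthogonal (hT₀.mapsTo_span (f := T.toLinearMap))
    have hSK : ∀ x ∈ Kᗮ, S x ∈ Kᗮ := S.mapsTo_orthogonal (hS₀.mapsTo_span (f := S.toLinearMap))
    have hK : finrank ℂ Kᗮ = 2 * n := by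
      have := K.finrank_add_finrank_orthogonal
      rw [finrank_span_eq_card hu₀.linearIndependent, hV] at this
      simp only [Fintype.card_fin] at this
      omega
    obtain ⟨u, c, c', hu, hrel⟩ := ih hK (T.restrict hTK) (S.restrict hSK)
      fun x => Subtype.ext (hTS x)
    refine ⟨Fin.cons u₀ fun i k => u i k, Fin.cons c₀ c, Fin.cons c₀' c', ?_, ?_⟩
    · refine hu₀.pairs_cons (hu.comp_linearIsometry Kᗮ.subtypeₗᵢ) fun k i l => ?_
      exact K.inner_right_of_mem_orthogonal (Submodule.subset_span ⟨k, rfl⟩) (u i l).2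
    · intro i
      cases i using Fin.cases with
      | zero => exact ⟨hc₀, hc₀', hT₀, hS₀⟩
      | succ i =>
        obtain ⟨hc, hc', hT, hS⟩ := hrel i
        exact ⟨hc, hc', hT.of_restrict fun _ => rfl, hS.of_restrict fun _ => rfl⟩

theorem exists_orthonormalBasis_toMatrix_eq_pauli {n : ℕ} (hV : finrank ℂ V = 2 * n)
    (T S : V →ₗᵢ[ℂ] V) (hTS : ∀ x, T (S x) = -S (T x)) :
    ∃ (b : OrthonormalBasis (Fin 2 × Fin n) ℂ V) (c c' : Fin n → ℂ),
      (∀ i, ‖c i‖ = 1 ∧ ‖c' i‖ = 1) ∧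
      LinearMap.toMatrix b.toBasis b.toBasis T.toLinearMap =
        blockDiagonal (fun i => c i • pauliZ) ∧
      LinearMap.toMatrix b.toBasis b.toBasis S.toLinearMap =
        blockDiagonal (fun i => c' i • pauliX) := by
  obtain ⟨u, c, c', hu, hrel⟩ := exists_orthonormal_pauli_pairs hV T S hTS
  have hspan := hu.linearIndependent.span_eq_top_of_card_eq_finrank' (by simp [hV])
  let b := OrthonormalBasis.mk hu hspan.ge
  refine ⟨b, c, c', fun i => ⟨(hrel i).1, (hrel i).2.1⟩, ?_, ?_⟩ <;>
    refine LinearMap.toMatrix_eq_blockDiagonal _ _ _ fun k => ?_ <;>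
    simp only [b, OrthonormalBasis.coe_toBasis, OrthonormalBasis.coe_mk]
  exacts [(hrel k).2.2.1, (hrel k).2.2.2]

end AnticommutingIsometries

namespace Matrix

variable {𝕜 ι : Type*} [RCLike 𝕜] [Fintype ι] [DecidableEq ι]

noncomputable def toEuclideanIsometry {U : Matrix ι ι 𝕜} (hU : U ∈ unitaryGroup ι 𝕜) :
    EuclideanSpace 𝕜 ι →ₗᵢ[𝕜] EuclideanSpace 𝕜 ι where
  toLinearMap := toEuclideanLin U
  norm_map' x := by
    rw [← coe_toEuclideanCLM_eq_toEuclideanLin, ContinuousLinearMap.coe_coe]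
    exact ContinuousLinearMap.norm_map_of_mem_unitary (Unitary.map_mem toEuclideanCLM hU) x

@[simp]
theorem toEuclideanIsometry_apply {U : Matrix ι ι 𝕜} (hU : U ∈ unitaryGroup ι 𝕜)
    (x : EuclideanSpace 𝕜 ι) : toEuclideanIsometry hU x = toEuclideanLin U x :=
  rfl

theorem star_toMatrix_mul_mul_toMatrix (b : OrthonormalBasis ι 𝕜 (EuclideanSpace 𝕜 ι))
    (A : Matrix ι ι 𝕜) :
    star ((EuclideanSpace.basisFun ι 𝕜).toBasis.toMatrix b) * A *
        (EuclideanSpace.basisFun ι 𝕜).toBasis.toMatrix b =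
      LinearMap.toMatrix b.toBasis b.toBasis (toEuclideanLin A) := by
  set e := EuclideanSpace.basisFun ι 𝕜
  have hstar : star (e.toBasis.toMatrix b) = b.toBasis.toMatrix e := by
    ext i j
    simp [e, Basis.toMatrix_apply, OrthonormalBasis.repr_apply_apply]
  rw [hstar, toEuclideanLin_eq_toLin_orthonormal,
    ← basis_toMatrix_mul_linearMap_toMatrix_mul_basis_toMatrix (b' := e.toBasis)
      (c' := e.toBasis),
    LinearMap.toMatrix_toLin, OrthonormalBasis.coe_toBasis, OrthonormalBasis.coe_toBasis]

end Matrix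

theorem anticommuting_triple_block_diagonal_form_general (n : ℕ)
    (U₁ U₂ U₃ : Matrix (Fin 2 × Fin n) (Fin 2 × Fin n) ℂ)
    (hU₁ : U₁ ∈ Matrix.unitaryGroup (Fin 2 × Fin n) ℂ)
    (hU₂ : U₂ ∈ Matrix.unitaryGroup (Fin 2 × Fin n) ℂ)
    (h12 : U₁ * U₂ = -(U₂ * U₁))
    (hprod : U₁ * U₂ * U₃ = Complex.I • 1) :
    ∃ B ∈ Matrix.unitaryGroup (Fin 2 × Fin n) ℂ, ∃ lam lam' : Fin n → ℂ,
      (∀ i, ‖lam i‖ = 1 ∧ ‖lam' i‖ = 1) ∧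
      star B * U₁ * B = Matrix.blockDiagonal (fun i => lam i • pauliZ) ∧
      star B * U₂ * B = Matrix.blockDiagonal (fun i => lam' i • pauliX) ∧
      star B * U₃ * B =
        Matrix.blockDiagonal (fun i => (starRingEnd ℂ (lam i * lam' i)) • pauliY) := by
  have hanti : ∀ x, toEuclideanIsometry hU₁ (toEuclideanIsometry hU₂ x) =
      -toEuclideanIsometry hU₂ (toEuclideanIsometry hU₁ x) := fun x => by
    simpa [mulVec_mulVec] using congr(toEuclideanLin $h12 x)
  obtain ⟨b, lam, lam', hnorm, h₁, h₂⟩ := exists_orthonormalBasis_toMatrix_eq_pauli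
    (n := n) (by simp) (toEuclideanIsometry hU₁) (toEuclideanIsometry hU₂) hanti
  set B := (EuclideanSpace.basisFun (Fin 2 × Fin n) ℂ).toBasis.toMatrix b
  have hB : B ∈ unitaryGroup (Fin 2 × Fin n) ℂ :=
    (EuclideanSpace.basisFun _ ℂ).toMatrix_orthonormalBasis_mem_unitary b
  have hconj : ∀ X, star B * X * B =
      Unitary.conjStarAlgAut ℂ _ (star (⟨B, hB⟩ : unitaryGroup (Fin 2 × Fin n) ℂ)) X :=
    fun X => by rw [Unitary.conjStarAlgAut_star_apply]
  have hD₁ : star B * U₁ * B = blockDiagonal (fun i => lam i • pauliZ) :=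
    (star_toMatrix_mul_mul_toMatrix b U₁).trans h₁
  have hD₂ : star B * U₂ * B = blockDiagonal (fun i => lam' i • pauliX) :=
    (star_toMatrix_mul_mul_toMatrix b U₂).trans h₂
  have hU₃ : U₃ = I • star (U₁ * U₂) := by
    calc U₃ = star (U₁ * U₂) * (U₁ * U₂ * U₃) := by
          rw [← mul_assoc, Unitary.star_mul_self_of_mem (mul_mem hU₁ hU₂), one_mul]
      _ = I • star (U₁ * U₂) := by rw [hprod, mul_smul_comm, mul_one]
  refine ⟨B, hB, lam, lam', hnorm, hD₁, hD₂, ?_⟩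
  rw [hU₃, hconj, map_smul, map_star, map_mul, ← hconj, ← hconj, hD₁, hD₂,
    smul_star_blockDiagonal_pauliZ_mul_pauliX]

theorem anticommuting_triple_block_diagonal_form (n : ℕ)
    (U₁ U₂ U₃ : Matrix (Fin 2 × Fin n) (Fin 2 × Fin n) ℂ)
    (hU₁ : U₁ ∈ Matrix.unitaryGroup (Fin 2 × Fin n) ℂ)
    (hU₂ : U₂ ∈ Matrix.unitaryGroup (Fin 2 × Fin n) ℂ)
    (hU₃ : U₃ ∈ Matrix.unitaryGroup (Fin 2 × Fin n) ℂ)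
    (h12 : U₁ * U₂ = -(U₂ * U₁)) (h13 : U₁ * U₃ = -(U₃ * U₁))
    (h23 : U₂ * U₃ = -(U₃ * U₂))
    (hprod : U₁ * U₂ * U₃ = Complex.I • 1) :
    ∃ B ∈ Matrix.unitaryGroup (Fin 2 × Fin n) ℂ, ∃ lam lam' : Fin n → ℂ,
      (∀ i, ‖lam i‖ = 1 ∧ ‖lam' i‖ = 1) ∧
      star B * U₁ * B = Matrix.blockDiagonal (fun i => lam i • pauliZ) ∧
      star B * U₂ * B = Matrix.blockDiagonal (fun i => lam' i • pauliX) ∧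
      star B * U₃ * B =
        Matrix.blockDiagonal (fun i => (starRingEnd ℂ (lam i * lam' i)) • pauliY) :=
  anticommuting_triple_block_diagonal_form_general n U₁ U₂ U₃ hU₁ hU₂ h12 hprod
end
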